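/- Let P_{m,n} = {1,…,n} × {1,…,m} ⊆ ℤ² with m, n ≥ 3. Any set of half-planes identifying P_{m,n} has size at least m + n − 2, and m + n − 2 half-planes suffice; hence the minimum number of identifying half-planes is exactly m + n − 2. -/

import Mathlib

noncomputable section

/-- The Euclidean plane. -/
abbrev Pt : Type := EuclideanSpace ℝ (Fin 2)

instance : DecidableEq Pt := Classical.decEq _

/-- A disk: a closed Euclidean ball with nonnegative radius. -/
def IsDisk (D : Set Pt) : Prop :=
  ∃ (c : Pt) (r : ℝ), 0 ≤ r ∧ D = Metric.closedBall c r

/-- A family of disks identifies a finite point set: every point is covered and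
every pair of distinct points is separated by some disk. -/
def Identifies (𝒟 : Finset (Set Pt)) (P : Finset Pt) : Prop :=
  (∀ p ∈ P, ∃ D ∈ 𝒟, p ∈ D) ∧
  (∀ p ∈ P, ∀ q ∈ P, p ≠ q → ∃ D ∈ 𝒟, (p ∈ D ∧ q ∉ D) ∨ (q ∈ D ∧ p ∉ D))

/-- Minimum number of disks needed to identify `P`. -/
def gammaID (P : Finset Pt) : ℕ :=
  sInf {k | ∃ 𝒟 : Finset (Set Pt), 𝒟.card = k ∧ (∀ D ∈ 𝒟, IsDisk D) ∧ Identifies 𝒟 P}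

/-- A closed half-plane. -/
def IsHalfPlane (H : Set Pt) : Prop :=
  ∃ (u : Pt) (c : ℝ), ‖u‖ = 1 ∧ H = {p : Pt | (inner ℝ p u : ℝ) ≤ c}

/-- The grid `{1,…,n} × {1,…,m}` embedded in the plane. -/
def gridPts (m n : ℕ) : Finset Pt :=
  (Finset.Icc 1 n ×ˢ Finset.Icc 1 m).image (fun q => (WithLp.toLp 2 ![(q.1 : ℝ), (q.2 : ℝ)] : Pt))

/-!
Along any line, membership in a half-plane is monotone. Hence, walking along one side of the
rectangle `[1, n] × [1, m]`, membership in a half-plane `H` changes at most once, and only if it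
differs at the two end corners. Since the sums of opposite corners agree, `H` cannot contain one
pair of opposite corners and miss the other, so membership changes along at most two sides. Each of
the `2 (m + n - 2)` pairs of consecutive boundary points must be separated by some member of an
identifying family, which therefore has at least `m + n - 2` members. The cuts `x = i + 1/2` and
`y = j + 1/2` attain this.
-/

open Finset

section SignChanges

open Classical

def signChanges (P : ℕ → Prop) (lo hi : ℕ) : Finset ℕ :=
  {i ∈ Ico lo hi | Xor (P i) (P (i + 1))}

lemma Monotone.not_and_of_xor {P : ℕ → Prop} (hP : Monotone P) {i : ℕ}
    (h : Xor (P i) (P (i + 1))) : ¬P i ∧ P (i + 1) :=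
  h.elim (fun h => absurd (hP i.le_succ h.1) h.2) And.symm

lemma card_signChanges_le {P : ℕ → Prop} (hP : Monotone P ∨ Antitone P) (lo hi : ℕ) :
    #(signChanges P lo hi) ≤ if Xor (P lo) (P hi) then 1 else 0 := by
  wlog hmono : Monotone P generalizing P
  · have hanti : Antitone P := hP.resolve_left hmono
    have hneg : signChanges (fun i => ¬P i) lo hi = signChanges P lo hi := by
      simp only [signChanges, xor_not_not]
    have hnegmono : Monotone fun i => ¬P i := fun i j hij h hj => h (hanti hij hj)
    simpa only [hneg, xor_not_not] using this (Or.inl hnegmono) hnegmono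
  split_ifs with hend
  · refine card_le_one.2 fun i hi j hj => ?_
    simp only [signChanges, mem_filter] at hi hj
    have hi' := hmono.not_and_of_xor hi.2
    have hj' := hmono.not_and_of_xor hj.2
    by_contra hne
    rcases Nat.lt_or_gt_of_ne hne with h | h
    · exact hj'.1 (hmono h hi'.2)
    · exact hi'.1 (hmono h hj'.2)
  · refine Nat.le_zero.2 (card_eq_zero.2 (filter_eq_empty_iff.2 fun i hi hxor => hend ?_))
    have hi' := hmono.not_and_of_xor hxor
    rw [mem_Ico] at hi
    exact Or.inr ⟨hmono (by omega) hi'.2, fun hlo => hi'.1 (hmono hi.1 hlo)⟩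

lemma sub_le_sum_card_signChanges {α : Type*} (𝒟 : Finset (Set α)) (pt : ℕ → α) {lo hi : ℕ}
    (h : ∀ i ∈ Ico lo hi, ∃ H ∈ 𝒟, Xor (pt i ∈ H) (pt (i + 1) ∈ H)) :
    hi - lo ≤ ∑ H ∈ 𝒟, #(signChanges (pt · ∈ H) lo hi) :=
  calc hi - lo = #(Ico lo hi) := (Nat.card_Ico lo hi).symm
    _ ≤ #(𝒟.biUnion fun H => signChanges (pt · ∈ H) lo hi) := card_le_card fun i hi => by
        obtain ⟨H, hH, hsep⟩ := h i hi
        exact mem_biUnion.2 ⟨H, hH, mem_filter.2 ⟨hi, hsep⟩⟩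
    _ ≤ _ := card_biUnion_le

end SignChanges

lemma ite_xor_add_le_two {A B C D : Prop} [Decidable (Xor A B)] [Decidable (Xor D C)]
    [Decidable (Xor A D)] [Decidable (Xor B C)] (hAC : A → C → B ∨ D) (hBD : B → D → A ∨ C) :
    ((if Xor A B then 1 else 0) + (if Xor D C then 1 else 0) + (if Xor A D then 1 else 0) +
      (if Xor B C then 1 else 0) : ℕ) ≤ 2 := by
  by_cases A <;> by_cases B <;> by_cases C <;> by_cases D <;> simp_all [Xor]

namespace IsHalfPlane

variable {H : Set Pt}

lemma mem_or_mem_of_add_eq_add (hH : IsHalfPlane H) {a b c d : Pt} (h : a + c = b + d)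
    (ha : a ∈ H) (hc : c ∈ H) : b ∈ H ∨ d ∈ H := by
  obtain ⟨u, t, -, rfl⟩ := hH
  by_contra! hbd
  simp only [Set.mem_ofPred_eq, not_le] at ha hc hbd
  have := congrArg (inner ℝ · u) h
  simp only [inner_add_left] at this
  linarith [hbd.1, hbd.2]

lemma monotone_or_antitone_mem_line (hH : IsHalfPlane H) (a v : Pt) :
    Monotone (fun t : ℝ => a + t • v ∈ H) ∨ Antitone (fun t : ℝ => a + t • v ∈ H) := by
  obtain ⟨u, c, -, rfl⟩ := hH
  simp only [Set.mem_ofPred_eq, inner_add_left, inner_smul_left, RCLike.conj_to_real]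
  rcases le_total (inner ℝ v u) 0 with hvu | hvu
  · exact Or.inl fun s t hst h => by nlinarith
  · exact Or.inr fun s t hst h => by nlinarith

end IsHalfPlane

def gridPt (x y : ℕ) : Pt := WithLp.toLp 2 ![(x : ℝ), (y : ℝ)]

@[simp] lemma gridPt_apply_zero (x y : ℕ) : gridPt x y 0 = x := rfl

@[simp] lemma gridPt_apply_one (x y : ℕ) : gridPt x y 1 = y := rfl

lemma gridPt_inj {x y x' y' : ℕ} : gridPt x y = gridPt x' y' ↔ x = x' ∧ y = y' := by
  refine ⟨fun h => ⟨?_, ?_⟩, by rintro ⟨rfl, rfl⟩; rfl⟩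
  · simpa using congrArg (· 0) h
  · simpa using congrArg (· 1) h

lemma gridPt_mem_gridPts {m n x y : ℕ} (hx : x ∈ Icc 1 n) (hy : y ∈ Icc 1 m) :
    gridPt x y ∈ gridPts m n :=
  mem_image.2 ⟨(x, y), mem_product.2 ⟨hx, hy⟩, rfl⟩

lemma mem_gridPts {m n : ℕ} {p : Pt} :
    p ∈ gridPts m n ↔ ∃ x ∈ Icc 1 n, ∃ y ∈ Icc 1 m, gridPt x y = p := by
  simp only [gridPts, mem_image, mem_product, Prod.exists]
  exact ⟨fun ⟨x, y, ⟨hx, hy⟩, h⟩ => ⟨x, hx, y, hy, h⟩, fun ⟨x, hx, y, hy, h⟩ => ⟨x, y, ⟨hx, hy⟩, h⟩⟩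

lemma gridPt_eq_add_smul_fst (x y : ℕ) :
    gridPt x y = gridPt 0 y + (x : ℝ) • WithLp.toLp 2 ![1, 0] := by
  ext i; fin_cases i <;> simp [gridPt]

lemma gridPt_eq_add_smul_snd (x y : ℕ) :
    gridPt x y = gridPt x 0 + (y : ℝ) • WithLp.toLp 2 ![0, 1] := by
  ext i; fin_cases i <;> simp [gridPt]

namespace IsHalfPlane

open Classical

variable {H : Set Pt}

lemma monotone_or_antitone_mem_row (hH : IsHalfPlane H) (y : ℕ) :
    Monotone (gridPt · y ∈ H) ∨ Antitone (gridPt · y ∈ H) := by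
  have hline : (gridPt · y ∈ H) =
      (fun t : ℝ => gridPt 0 y + t • WithLp.toLp 2 ![1, 0] ∈ H) ∘ (Nat.cast : ℕ → ℝ) :=
    funext fun x => by rw [Function.comp_apply, ← gridPt_eq_add_smul_fst]
  rw [hline]
  exact (hH.monotone_or_antitone_mem_line _ _).imp (·.comp Nat.mono_cast)
    (·.comp_monotone Nat.mono_cast)

lemma monotone_or_antitone_mem_col (hH : IsHalfPlane H) (x : ℕ) :
    Monotone (gridPt x · ∈ H) ∨ Antitone (gridPt x · ∈ H) := by
  have hline : (gridPt x · ∈ H) =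
      (fun t : ℝ => gridPt x 0 + t • WithLp.toLp 2 ![0, 1] ∈ H) ∘ (Nat.cast : ℕ → ℝ) :=
    funext fun y => by rw [Function.comp_apply, ← gridPt_eq_add_smul_snd]
  rw [hline]
  exact (hH.monotone_or_antitone_mem_line _ _).imp (·.comp Nat.mono_cast)
    (·.comp_monotone Nat.mono_cast)

lemma card_signChanges_boundary_le (hH : IsHalfPlane H) (m n : ℕ) :
    #(signChanges (gridPt · 1 ∈ H) 1 n) + #(signChanges (gridPt · m ∈ H) 1 n) +
      #(signChanges (gridPt 1 · ∈ H) 1 m) + #(signChanges (gridPt n · ∈ H) 1 m) ≤ 2 := by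
  have hdiag : gridPt 1 1 + gridPt n m = gridPt n 1 + gridPt 1 m := by
    ext i; fin_cases i <;> simp [add_comm]
  calc _ ≤ (if Xor (gridPt 1 1 ∈ H) (gridPt n 1 ∈ H) then 1 else 0) +
          (if Xor (gridPt 1 m ∈ H) (gridPt n m ∈ H) then 1 else 0) +
          (if Xor (gridPt 1 1 ∈ H) (gridPt 1 m ∈ H) then 1 else 0) +
          (if Xor (gridPt n 1 ∈ H) (gridPt n m ∈ H) then 1 else 0) := by
        gcongr
        · exact card_signChanges_le (hH.monotone_or_antitone_mem_row 1) 1 n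
        · exact card_signChanges_le (hH.monotone_or_antitone_mem_row m) 1 n
        · exact card_signChanges_le (hH.monotone_or_antitone_mem_col 1) 1 m
        · exact card_signChanges_le (hH.monotone_or_antitone_mem_col n) 1 m
    _ ≤ 2 := ite_xor_add_le_two (hH.mem_or_mem_of_add_eq_add hdiag)
        (hH.mem_or_mem_of_add_eq_add hdiag.symm)

end IsHalfPlane

lemma Identifies.sub_le_sum_card_signChanges {𝒟 : Finset (Set Pt)} {m n : ℕ}
    (h𝒟 : Identifies 𝒟 (gridPts m n)) {pt : ℕ → Pt} {lo hi : ℕ}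
    (hpt : ∀ i ∈ Icc lo hi, pt i ∈ gridPts m n) (hinj : ∀ i, pt i ≠ pt (i + 1)) :
    hi - lo ≤ ∑ H ∈ 𝒟, #(signChanges (pt · ∈ H) lo hi) :=
  _root_.sub_le_sum_card_signChanges 𝒟 pt fun i hi => by
    rw [mem_Ico] at hi
    exact h𝒟.2 _ (hpt i (mem_Icc.2 ⟨hi.1, hi.2.le⟩)) _
      (hpt (i + 1) (mem_Icc.2 ⟨by omega, hi.2⟩)) (hinj i)

theorem card_le_of_identifies_gridPts {m n : ℕ} (hm : 0 < m) (hn : 0 < n)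
    {𝒟 : Finset (Set Pt)} (hHP : ∀ H ∈ 𝒟, IsHalfPlane H) (h𝒟 : Identifies 𝒟 (gridPts m n)) :
    m + n - 2 ≤ #𝒟 := by
  have row : ∀ y ∈ Icc 1 m, n - 1 ≤ ∑ H ∈ 𝒟, #(signChanges (gridPt · y ∈ H) 1 n) :=
    fun y hy => h𝒟.sub_le_sum_card_signChanges (fun x hx => gridPt_mem_gridPts hx hy)
      fun x => by simp [gridPt_inj]
  have col : ∀ x ∈ Icc 1 n, m - 1 ≤ ∑ H ∈ 𝒟, #(signChanges (gridPt x · ∈ H) 1 m) :=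
    fun x hx => h𝒟.sub_le_sum_card_signChanges (fun y hy => gridPt_mem_gridPts hx hy)
      fun y => by simp [gridPt_inj]
  have hbound : 2 * (n - 1) + 2 * (m - 1) ≤ 2 * #𝒟 :=
    calc 2 * (n - 1) + 2 * (m - 1)
        ≤ ∑ H ∈ 𝒟, (#(signChanges (gridPt · 1 ∈ H) 1 n) + #(signChanges (gridPt · m ∈ H) 1 n) +
            #(signChanges (gridPt 1 · ∈ H) 1 m) + #(signChanges (gridPt n · ∈ H) 1 m)) := by
          simp only [sum_add_distrib]
          linarith [row 1 (left_mem_Icc.2 hm), row m (right_mem_Icc.2 hm),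
            col 1 (left_mem_Icc.2 hn), col n (right_mem_Icc.2 hn)]
      _ ≤ ∑ _H ∈ 𝒟, 2 := sum_le_sum fun H hH => (hHP H hH).card_signChanges_boundary_le m n
      _ = 2 * #𝒟 := by rw [sum_const, smul_eq_mul, mul_comm]
  omega

lemma isHalfPlane_setOf_apply_le (k : Fin 2) (t : ℝ) : IsHalfPlane {p : Pt | p k ≤ t} :=
  ⟨EuclideanSpace.single k 1, t, by simp, by ext p; simp [EuclideanSpace.inner_single_right]⟩

lemma isHalfPlane_setOf_le_apply (k : Fin 2) (t : ℝ) : IsHalfPlane {p : Pt | t ≤ p k} :=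
  ⟨EuclideanSpace.single k (-1), -t, by simp, by ext p; simp [EuclideanSpace.inner_single_right]⟩

/-- The cut at `x = 3/2` is reversed so that the column `x = 1` is covered as well. -/
def verticalCut (i : ℕ) : Set Pt :=
  if i = 1 then {p | 3 / 2 ≤ p 0} else {p | p 0 ≤ i + 1 / 2}

def horizontalCut (j : ℕ) : Set Pt := {p | p 1 ≤ j + 1 / 2}

lemma isHalfPlane_verticalCut (i : ℕ) : IsHalfPlane (verticalCut i) := by
  unfold verticalCut
  split_ifs
  exacts [isHalfPlane_setOf_le_apply 0 _, isHalfPlane_setOf_apply_le 0 _]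

lemma xor_mem_verticalCut {i : ℕ} {p q : Pt} (hp : p 0 ≤ i) (hq : i + 1 ≤ q 0) :
    Xor (p ∈ verticalCut i) (q ∈ verticalCut i) := by
  unfold verticalCut
  split_ifs with hi
  · subst hi
    exact Or.inr ⟨by simp only [Set.mem_ofPred_eq]; push_cast at hq; linarith,
      by simp only [Set.mem_ofPred_eq, not_le]; push_cast at hp; linarith⟩
  · exact Or.inl ⟨by simp only [Set.mem_ofPred_eq]; linarith,
      by simp only [Set.mem_ofPred_eq, not_le]; linarith⟩

lemma xor_mem_horizontalCut {j : ℕ} {p q : Pt} (hp : p 1 ≤ j) (hq : j + 1 ≤ q 1) :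
    Xor (p ∈ horizontalCut j) (q ∈ horizontalCut j) :=
  Or.inl ⟨by simp only [horizontalCut, Set.mem_ofPred_eq]; linarith,
    by simp only [horizontalCut, Set.mem_ofPred_eq, not_le]; linarith⟩

open Classical in
def gridCuts (m n : ℕ) : Finset (Set Pt) :=
  (Icc 1 (n - 1)).image verticalCut ∪ (Icc 1 (m - 1)).image horizontalCut

lemma isHalfPlane_of_mem_gridCuts {m n : ℕ} {H : Set Pt} (hH : H ∈ gridCuts m n) :
    IsHalfPlane H := by
  rcases mem_union.1 hH with hH | hH <;> obtain ⟨i, -, rfl⟩ := mem_image.1 hH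
  exacts [isHalfPlane_verticalCut i, isHalfPlane_setOf_apply_le 1 _]

lemma card_gridCuts_le (m n : ℕ) : #(gridCuts m n) ≤ n - 1 + (m - 1) :=
  (card_union_le _ _).trans (add_le_add (card_image_le.trans (by simp))
    (card_image_le.trans (by simp)))

lemma exists_xor_mem_gridCuts_of_lt_fst {m n x x' : ℕ} (y y' : ℕ) (hx : 1 ≤ x) (hxx' : x < x')
    (hx' : x' ≤ n) : ∃ H ∈ gridCuts m n, Xor (gridPt x y ∈ H) (gridPt x' y' ∈ H) := by
  refine ⟨verticalCut x, mem_union_left _ (mem_image_of_mem _ (mem_Icc.2 ⟨hx, by omega⟩)),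
    xor_mem_verticalCut (by simp) ?_⟩
  simpa using (Nat.cast_le (α := ℝ)).2 hxx'

lemma exists_xor_mem_gridCuts_of_lt_snd {m n y y' : ℕ} (x x' : ℕ) (hy : 1 ≤ y) (hyy' : y < y')
    (hy' : y' ≤ m) : ∃ H ∈ gridCuts m n, Xor (gridPt x y ∈ H) (gridPt x' y' ∈ H) := by
  refine ⟨horizontalCut y, mem_union_right _ (mem_image_of_mem _ (mem_Icc.2 ⟨hy, by omega⟩)),
    xor_mem_horizontalCut (by simp) ?_⟩
  simpa using (Nat.cast_le (α := ℝ)).2 hyy'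

lemma identifies_gridCuts {m n : ℕ} (hn : 3 ≤ n) : Identifies (gridCuts m n) (gridPts m n) := by
  constructor
  · rintro p hp
    obtain ⟨x, hx, y, -, rfl⟩ := mem_gridPts.1 hp
    rw [mem_Icc] at hx
    by_cases hx1 : x = 1
    · refine ⟨verticalCut 2,
        mem_union_left _ (mem_image_of_mem _ (mem_Icc.2 ⟨by omega, by omega⟩)), ?_⟩
      rw [verticalCut, if_neg (by norm_num), Set.mem_ofPred_eq, gridPt_apply_zero, hx1]
      norm_num
    · refine ⟨verticalCut 1,
        mem_union_left _ (mem_image_of_mem _ (mem_Icc.2 ⟨le_rfl, by omega⟩)), ?_⟩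
      have : (2 : ℝ) ≤ x := by exact_mod_cast (by omega : 2 ≤ x)
      rw [verticalCut, if_pos rfl, Set.mem_ofPred_eq, gridPt_apply_zero]
      linarith
  · rintro p hp q hq hpq
    obtain ⟨x, hx, y, hy, rfl⟩ := mem_gridPts.1 hp
    obtain ⟨x', hx', y', hy', rfl⟩ := mem_gridPts.1 hq
    rw [mem_Icc] at hx hy hx' hy'
    rcases lt_trichotomy x x' with hlt | rfl | hgt
    · exact exists_xor_mem_gridCuts_of_lt_fst y y' hx.1 hlt hx'.2
    · rcases lt_trichotomy y y' with hlt | rfl | hgt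
      · exact exists_xor_mem_gridCuts_of_lt_snd x x hy.1 hlt hy'.2
      · exact absurd rfl hpq
      · obtain ⟨H, hH, hsep⟩ := exists_xor_mem_gridCuts_of_lt_snd x x hy'.1 hgt hy.2
        exact ⟨H, hH, Or.symm hsep⟩
    · obtain ⟨H, hH, hsep⟩ := exists_xor_mem_gridCuts_of_lt_fst y' y hx'.1 hgt hx.2
      exact ⟨H, hH, Or.symm hsep⟩

theorem exists_identifies_gridPts_card_le {m n : ℕ} (hn : 3 ≤ n) :
    ∃ 𝒟 : Finset (Set Pt), (∀ H ∈ 𝒟, IsHalfPlane H) ∧ Identifies 𝒟 (gridPts m n) ∧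
      #𝒟 ≤ n - 1 + (m - 1) :=
  ⟨gridCuts m n, fun _ => isHalfPlane_of_mem_gridCuts, identifies_gridCuts hn, card_gridCuts_le m n⟩

theorem grid_halfplanes (m n : ℕ) (hm : 3 ≤ m) (hn : 3 ≤ n) :
    (∀ 𝒟 : Finset (Set Pt), (∀ H ∈ 𝒟, IsHalfPlane H) → Identifies 𝒟 (gridPts m n) →
      m + n - 2 ≤ 𝒟.card) ∧
    (∃ 𝒟 : Finset (Set Pt), (∀ H ∈ 𝒟, IsHalfPlane H) ∧ Identifies 𝒟 (gridPts m n) ∧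
      𝒟.card = m + n - 2) := by
  have lower : ∀ 𝒟 : Finset (Set Pt), (∀ H ∈ 𝒟, IsHalfPlane H) → Identifies 𝒟 (gridPts m n) →
      m + n - 2 ≤ #𝒟 := fun _ => card_le_of_identifies_gridPts (by omega) (by omega)
  obtain ⟨𝒟, hHP, h𝒟, hcard⟩ := exists_identifies_gridPts_card_le (m := m) hn
  exact ⟨lower, 𝒟, hHP, h𝒟, le_antisymm (by omega) (lower 𝒟 hHP h𝒟)⟩
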